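/- Let n ≥ 2, let Ω ⊆ ℝⁿ be measurable, let x ∈ ℝⁿ, ρ > 0, and let U, Π : ℝⁿ → [0, ∞] be measurable functions. Suppose there exist constants a > 0, b ∈ ℝ, C₁ > 0, ε₀ ∈ (0,1) and a threshold λ₀ ≥ 0 such that the local level-set inequality d_U(B_ρ(x); ε^{−a} λ) ≤ C₁ ε d_U(B_ρ(x); λ) + d_Π(B_ρ(x); ε^{b} λ) holds for all λ > λ₀ and all ε ∈ (0, ε₀). Then for every α with 0 < α < 1/a and every β with 0 < β < ∞, if ‖U‖_{L^{α,β}(B_ρ(x) ∩ Ω)} < ∞, then ‖U‖_{L^{α,β}(B_ρ(x) ∩ Ω)} ≤ C λ₀ ρ^{n/α} + C ‖Π‖_{L^{α,β}(B_ρ(x) ∩ Ω)} for a constant C depending only on n, a, b, C₁, ε₀, α and β. -/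

import Mathlib

/-!
Substituting `lam = ε ^ (-a) * t` in the Lorentz integral of `U` and splitting at `t = lam₀`,
the part below `lam₀` is at most `lam₀ ^ β / β * |B_ρ(x)| ^ (β / α)`, while above `lam₀` the
good-λ inequality bounds it by `(2 C₁ ε) ^ (β / α)` times the Lorentz integral of `U` plus a
multiple of that of `V`. The substitution costs a factor `ε ^ (-a β)`, so the coefficient of
`U` is `(2 C₁) ^ (β / α) ε ^ (β / α - a β)`, which is at most `1 / 2` for small `ε` precisely
because `α < 1 / a`; as the Lorentz norm of `U` is finite, that term is absorbed.
-/

open MeasureTheory Metric Set ENNReal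

noncomputable section

/-- Distribution function over a set `Ω` of an `ℝ≥0∞`-valued function. -/
def distFn {n : ℕ} (Ω : Set (EuclideanSpace ℝ (Fin n)))
    (g : EuclideanSpace ℝ (Fin n) → ℝ≥0∞) (lam : ℝ) : ℝ≥0∞ :=
  volume {x ∈ Ω | ENNReal.ofReal lam < g x}

/-- Lorentz quasinorm `‖g‖_{L^{s,t}(Ω)}` for finite `t`. -/
def lorentzNorm {n : ℕ} (Ω : Set (EuclideanSpace ℝ (Fin n)))
    (g : EuclideanSpace ℝ (Fin n) → ℝ≥0∞) (s t : ℝ) : ℝ≥0∞ :=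
  (ENNReal.ofReal s *
    ∫⁻ lam in Set.Ioi (0 : ℝ),
      ENNReal.ofReal (lam ^ (t - 1)) * (distFn Ω g lam) ^ (t / s)) ^ (1 / t)

open Filter Topology

def lorentzIntegral (p q : ℝ) (D : ℝ → ℝ≥0∞) : ℝ≥0∞ :=
  ∫⁻ t in Ioi (0 : ℝ), ENNReal.ofReal (t ^ (q - 1)) * D t ^ p

lemma lorentzNorm_rpow {n : ℕ} (Ω : Set (EuclideanSpace ℝ (Fin n)))
    (g : EuclideanSpace ℝ (Fin n) → ℝ≥0∞) (s : ℝ) {t : ℝ} (ht : t ≠ 0) :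
    lorentzNorm Ω g s t ^ t = ENNReal.ofReal s * lorentzIntegral (t / s) t (distFn Ω g) := by
  rw [lorentzNorm, one_div, ENNReal.rpow_inv_rpow ht, lorentzIntegral]

lemma distFn_antitone {n : ℕ} (Ω : Set (EuclideanSpace ℝ (Fin n)))
    (g : EuclideanSpace ℝ (Fin n) → ℝ≥0∞) : Antitone (distFn Ω g) :=
  fun _ _ h => measure_mono fun _ hz => ⟨hz.1, (ENNReal.ofReal_le_ofReal h).trans_lt hz.2⟩

lemma distFn_le_volume {n : ℕ} (Ω : Set (EuclideanSpace ℝ (Fin n)))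
    (g : EuclideanSpace ℝ (Fin n) → ℝ≥0∞) (t : ℝ) : distFn Ω g t ≤ volume Ω :=
  measure_mono fun _ hz => hz.1

lemma setLIntegral_Ioi_comp_mul_left (f : ℝ → ℝ≥0∞) {c : ℝ} (hc : 0 < c) :
    ∫⁻ t in Ioi (0 : ℝ), f (c * t) = ENNReal.ofReal c⁻¹ * ∫⁻ t in Ioi (0 : ℝ), f t := by
  have hmul : MeasurableEmbedding (c * ·) := (Homeomorph.mulLeft₀ c hc.ne').measurableEmbedding
  have hpre : (c * ·) ⁻¹' Ioi (0 : ℝ) = Ioi 0 := by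
    ext t
    exact mul_pos_iff_of_pos_left hc
  have hmap : Measure.map (c * ·) (volume.restrict (Ioi (0 : ℝ)))
      = (ENNReal.ofReal c⁻¹ • volume).restrict (Ioi 0) := by
    rw [← hpre, ← Measure.restrict_map hmul.measurable measurableSet_Ioi, hpre,
      Real.map_volume_mul_left hc.ne', abs_of_pos (inv_pos.mpr hc)]
  rw [← hmul.lintegral_map, hmap, Measure.restrict_smul, lintegral_smul_measure, smul_eq_mul]

lemma setLIntegral_Ioc_rpow {r c : ℝ} (hr : -1 < r) (hc : 0 ≤ c) :
    ∫⁻ t in Ioc (0 : ℝ) c, ENNReal.ofReal (t ^ r) = ENNReal.ofReal (c ^ (r + 1) / (r + 1)) := by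
  have hint : IntegrableOn (fun t : ℝ => t ^ r) (Ioc 0 c) := by
    rw [← intervalIntegrable_iff_integrableOn_Ioc_of_le hc]
    exact intervalIntegral.intervalIntegrable_rpow' hr
  rw [← ofReal_integral_eq_lintegral_ofReal hint
    (ae_restrict_of_forall_mem measurableSet_Ioc fun t ht => Real.rpow_nonneg ht.1.le r),
    ← intervalIntegral.integral_of_le hc, integral_rpow (Or.inl hr),
    Real.zero_rpow (by linarith), sub_zero]

lemma lorentzIntegral_comp_mul_left (D : ℝ → ℝ≥0∞) (p q : ℝ) {c : ℝ} (hc : 0 < c) :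
    ∫⁻ t in Ioi (0 : ℝ), ENNReal.ofReal (t ^ (q - 1)) * D (c * t) ^ p
      = ENNReal.ofReal (c ^ (-q)) * lorentzIntegral p q D := by
  have hpt : ∀ t ∈ Ioi (0 : ℝ), ENNReal.ofReal (t ^ (q - 1)) * D (c * t) ^ p
      = ENNReal.ofReal (c ^ (1 - q)) * (ENNReal.ofReal ((c * t) ^ (q - 1)) * D (c * t) ^ p) := by
    intro t ht
    rw [← mul_assoc, ← ENNReal.ofReal_mul (by positivity), Real.mul_rpow hc.le (le_of_lt ht),
      ← mul_assoc, ← Real.rpow_add hc, sub_add_sub_cancel, sub_self, Real.rpow_zero, one_mul]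
  rw [setLIntegral_congr_fun measurableSet_Ioi hpt, lintegral_const_mul' _ _ ofReal_ne_top,
    setLIntegral_Ioi_comp_mul_left (fun t => ENNReal.ofReal (t ^ (q - 1)) * D t ^ p) hc,
    ← mul_assoc, ← ENNReal.ofReal_mul (by positivity), ← Real.rpow_neg_one,
    ← Real.rpow_add hc, lorentzIntegral, show 1 - q + -1 = -q by ring]

lemma ENNReal.le_two_mul_of_le_add_inv_two_mul {x y : ℝ≥0∞} (hx : x ≠ ∞)
    (h : x ≤ y + 2⁻¹ * x) : x ≤ 2 * y := by
  rw [← ENNReal.div_eq_inv_mul, ← tsub_le_iff_right, ENNReal.sub_half hx] at h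
  calc x = 2 * (x / 2) := (ENNReal.mul_div_cancel two_ne_zero ofNat_ne_top).symm
    _ ≤ 2 * y := by gcongr

lemma ENNReal.le_mul_add_of_rpow_le {q : ℝ} (hq : 0 < q) {z x y A B : ℝ≥0∞}
    (h : z ^ q ≤ A * x ^ q + B * y ^ q) : z ≤ (2 * max A B) ^ (1 / q) * (x + y) := by
  have hmax : z ^ q ≤ 2 * max A B * (x + y) ^ q :=
    calc z ^ q ≤ A * x ^ q + B * y ^ q := h
      _ ≤ max A B * (x + y) ^ q + max A B * (x + y) ^ q := by
        gcongr
        exacts [le_max_left A B, le_self_add, le_max_right A B, le_add_self]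
      _ = 2 * max A B * (x + y) ^ q := by ring
  rw [← ENNReal.rpow_le_rpow_iff hq, ENNReal.mul_rpow_of_nonneg _ _ hq.le, ← ENNReal.rpow_mul,
    one_div_mul_cancel hq.ne', ENNReal.rpow_one]
  exact hmax

lemma exists_rpow_neg_mul_rpow_le {a q p K ε₀ : ℝ} (hK : 0 ≤ K) (hpq : a * q < p)
    (hε₀ : 0 < ε₀) : ∃ ε ∈ Ioo 0 ε₀, (ε ^ (-a)) ^ q * (K * ε) ^ p ≤ 1 / 2 := by
  have hlim : Tendsto (fun ε : ℝ => K ^ p * ε ^ (p - a * q)) (𝓝[>] 0) (𝓝 0) := by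
    have hcont : Continuous fun ε : ℝ => K ^ p * ε ^ (p - a * q) :=
      continuous_const.mul (Real.continuous_rpow_const (sub_pos.mpr hpq).le)
    have h := (hcont.tendsto 0).mono_left (nhdsWithin_le_nhds (s := Ioi 0))
    rwa [Real.zero_rpow (sub_pos.mpr hpq).ne', mul_zero] at h
  obtain ⟨ε, hsmall, hε⟩ :=
    ((hlim.eventually (ge_mem_nhds one_half_pos)).and (Ioo_mem_nhdsGT hε₀)).exists
  refine ⟨ε, hε, le_of_eq_of_le ?_ hsmall⟩
  rw [← Real.rpow_mul hε.1.le, Real.mul_rpow hK hε.1.le, mul_left_comm, ← Real.rpow_add hε.1,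
    neg_mul, neg_add_eq_sub]

section GoodLambda

variable {D E : ℝ → ℝ≥0∞} {M : ℝ≥0∞} {p q lam₀ c₁ c₂ : ℝ}

lemma setLIntegral_Ioc_le_of_le (hDM : ∀ t, D t ≤ M) (hp : 0 ≤ p) (hq : 0 < q)
    (hlam₀ : 0 ≤ lam₀) :
    ∫⁻ t in Ioc (0 : ℝ) lam₀, ENNReal.ofReal (t ^ (q - 1)) * D t ^ p
      ≤ ENNReal.ofReal (lam₀ ^ q / q) * M ^ p :=
  calc ∫⁻ t in Ioc (0 : ℝ) lam₀, ENNReal.ofReal (t ^ (q - 1)) * D t ^ p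
      ≤ ∫⁻ t in Ioc (0 : ℝ) lam₀, ENNReal.ofReal (t ^ (q - 1)) * M ^ p := by
        gcongr with t
        exact hDM t
    _ = ENNReal.ofReal (lam₀ ^ q / q) * M ^ p := by
        rw [lintegral_mul_const _ (by fun_prop),
          setLIntegral_Ioc_rpow (by linarith) hlam₀, sub_add_cancel]

lemma setLIntegral_Ioi_le_of_goodLambda {δ : ℝ≥0∞} (hD : Antitone D) (hp : 0 ≤ p) (hc₂ : 0 < c₂)
    (hlam₀ : 0 ≤ lam₀) (hgood : ∀ t, lam₀ < t → D (c₁ * t) ≤ δ * D t + E (c₂ * t)) :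
    ∫⁻ t in Ioi lam₀, ENNReal.ofReal (t ^ (q - 1)) * D (c₁ * t) ^ p
      ≤ 2 ^ p * δ ^ p * lorentzIntegral p q D
        + 2 ^ p * ENNReal.ofReal (c₂ ^ (-q)) * lorentzIntegral p q E :=
  calc ∫⁻ t in Ioi lam₀, ENNReal.ofReal (t ^ (q - 1)) * D (c₁ * t) ^ p
      ≤ ∫⁻ t in Ioi lam₀, 2 ^ p * δ ^ p * (ENNReal.ofReal (t ^ (q - 1)) * D t ^ p)
          + 2 ^ p * (ENNReal.ofReal (t ^ (q - 1)) * E (c₂ * t) ^ p) := by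
        refine setLIntegral_mono' measurableSet_Ioi fun t ht => ?_
        calc ENNReal.ofReal (t ^ (q - 1)) * D (c₁ * t) ^ p
            ≤ ENNReal.ofReal (t ^ (q - 1)) * (2 ^ p * ((δ * D t) ^ p + E (c₂ * t) ^ p)) := by
              gcongr
              exact (rpow_le_rpow (hgood t ht) hp).trans
                (add_rpow_le_two_rpow_mul_rpow_add_rpow _ _ hp)
          _ = _ := by rw [mul_rpow_of_nonneg _ _ hp]; ring
    _ = 2 ^ p * δ ^ p * (∫⁻ t in Ioi lam₀, ENNReal.ofReal (t ^ (q - 1)) * D t ^ p)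
          + 2 ^ p * ∫⁻ t in Ioi lam₀, ENNReal.ofReal (t ^ (q - 1)) * E (c₂ * t) ^ p := by
        have hmeas : Measurable fun t : ℝ => ENNReal.ofReal (t ^ (q - 1)) * D t ^ p :=
          (measurable_id.pow_const _).ennreal_ofReal.mul (hD.measurable.pow_const p)
        rw [lintegral_add_left (hmeas.const_mul _), lintegral_const_mul _ hmeas,
          lintegral_const_mul' _ _ (rpow_ne_top_of_nonneg hp ofNat_ne_top)]
    _ ≤ 2 ^ p * δ ^ p * lorentzIntegral p q D
          + 2 ^ p * (ENNReal.ofReal (c₂ ^ (-q)) * lorentzIntegral p q E) := by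
        rw [lorentzIntegral, ← lorentzIntegral_comp_mul_left E p q hc₂]
        gcongr
    _ = _ := by ring

lemma lorentzIntegral_le_of_goodLambda (hD : Antitone D) (hDM : ∀ t, D t ≤ M) (hp : 0 ≤ p)
    (hq : 0 < q) (hlam₀ : 0 ≤ lam₀) (hc₁ : 0 < c₁) (hc₂ : 0 < c₂) {δ : ℝ≥0∞}
    (hgood : ∀ t, lam₀ < t → D (c₁ * t) ≤ δ * D t + E (c₂ * t)) :
    lorentzIntegral p q D ≤ ENNReal.ofReal (c₁ ^ q) * (ENNReal.ofReal (lam₀ ^ q / q) * M ^ p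
      + (2 ^ p * δ ^ p * lorentzIntegral p q D
        + 2 ^ p * ENNReal.ofReal (c₂ ^ (-q)) * lorentzIntegral p q E)) := by
  have hrescale : lorentzIntegral p q D = ENNReal.ofReal (c₁ ^ q)
      * ∫⁻ t in Ioi (0 : ℝ), ENNReal.ofReal (t ^ (q - 1)) * D (c₁ * t) ^ p := by
    rw [lorentzIntegral_comp_mul_left D p q hc₁, ← mul_assoc, ← ENNReal.ofReal_mul (by positivity),
      ← Real.rpow_add hc₁, add_neg_cancel, Real.rpow_zero, ENNReal.ofReal_one, one_mul]
  conv_lhs => rw [hrescale, ← Ioc_union_Ioi_eq_Ioi hlam₀,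
    lintegral_union measurableSet_Ioi Ioc_disjoint_Ioi_same]
  gcongr
  · exact setLIntegral_Ioc_le_of_le (fun t => hDM (c₁ * t)) hp hq hlam₀
  · exact setLIntegral_Ioi_le_of_goodLambda hD hp hc₂ hlam₀ hgood

lemma lorentzIntegral_le_of_goodLambda_of_small (hD : Antitone D) (hDM : ∀ t, D t ≤ M)
    (hp : 0 ≤ p) (hq : 0 < q) (hlam₀ : 0 ≤ lam₀) (hc₁ : 0 < c₁) (hc₂ : 0 < c₂) {δ : ℝ}
    (hδ : 0 ≤ δ) (hsmall : c₁ ^ q * (2 * δ) ^ p ≤ 1 / 2)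
    (hgood : ∀ t, lam₀ < t → D (c₁ * t) ≤ ENNReal.ofReal δ * D t + E (c₂ * t))
    (hfin : lorentzIntegral p q D ≠ ∞) :
    lorentzIntegral p q D ≤ 2 * (ENNReal.ofReal (c₁ ^ q) * (ENNReal.ofReal (lam₀ ^ q / q) * M ^ p
      + 2 ^ p * ENNReal.ofReal (c₂ ^ (-q)) * lorentzIntegral p q E)) := by
  have hθ : ENNReal.ofReal (c₁ ^ q) * (2 ^ p * ENNReal.ofReal δ ^ p) ≤ 2⁻¹ :=
    calc ENNReal.ofReal (c₁ ^ q) * (2 ^ p * ENNReal.ofReal δ ^ p)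
        = ENNReal.ofReal (c₁ ^ q * (2 * δ) ^ p) := by
          rw [Real.mul_rpow zero_le_two hδ, ENNReal.ofReal_mul (by positivity),
            ENNReal.ofReal_mul (by positivity), ← ENNReal.ofReal_rpow_of_nonneg zero_le_two hp,
            ← ENNReal.ofReal_rpow_of_nonneg hδ hp, ENNReal.ofReal_ofNat]
      _ ≤ ENNReal.ofReal (1 / 2) := ENNReal.ofReal_le_ofReal hsmall
      _ = 2⁻¹ := by rw [one_div, ENNReal.ofReal_inv_of_pos two_pos, ENNReal.ofReal_ofNat]
  set X := ENNReal.ofReal (c₁ ^ q) * (ENNReal.ofReal (lam₀ ^ q / q) * M ^ p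
      + 2 ^ p * ENNReal.ofReal (c₂ ^ (-q)) * lorentzIntegral p q E)
  refine ENNReal.le_two_mul_of_le_add_inv_two_mul hfin ?_
  calc lorentzIntegral p q D
      ≤ _ := lorentzIntegral_le_of_goodLambda hD hDM hp hq hlam₀ hc₁ hc₂ hgood
    _ = X + ENNReal.ofReal (c₁ ^ q) * (2 ^ p * ENNReal.ofReal δ ^ p) * lorentzIntegral p q D := by
        ring
    _ ≤ X + 2⁻¹ * lorentzIntegral p q D := by gcongr

end GoodLambda

lemma lorentzNorm_rpow_le_of_goodLambda {n : ℕ} {Ω : Set (EuclideanSpace ℝ (Fin n))}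
    {U V : EuclideanSpace ℝ (Fin n) → ℝ≥0∞} {α β lam₀ c₁ c₂ δ : ℝ} (hα : 0 < α) (hβ : 0 < β)
    (hlam₀ : 0 ≤ lam₀) (hc₁ : 0 < c₁) (hc₂ : 0 < c₂) (hδ : 0 ≤ δ)
    (hsmall : c₁ ^ β * (2 * δ) ^ (β / α) ≤ 1 / 2)
    (hgood : ∀ t, lam₀ < t →
      distFn Ω U (c₁ * t) ≤ ENNReal.ofReal δ * distFn Ω U t + distFn Ω V (c₂ * t))
    (hfin : lorentzNorm Ω U α β ≠ ∞) :
    lorentzNorm Ω U α β ^ β ≤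
      2 * (ENNReal.ofReal α * ENNReal.ofReal (c₁ ^ β))
          * (ENNReal.ofReal (lam₀ ^ β / β) * volume Ω ^ (β / α))
        + 2 * ENNReal.ofReal (c₁ ^ β) * 2 ^ (β / α) * ENNReal.ofReal (c₂ ^ (-β))
          * lorentzNorm Ω V α β ^ β := by
  have hα' : ENNReal.ofReal α ≠ 0 := (ENNReal.ofReal_pos.mpr hα).ne'
  have hIfin : lorentzIntegral (β / α) β (distFn Ω U) ≠ ∞ := by
    intro h
    apply rpow_ne_top_of_nonneg hβ.le hfin
    rw [lorentzNorm_rpow _ _ _ hβ.ne', h, mul_top hα']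
  rw [lorentzNorm_rpow _ _ _ hβ.ne', lorentzNorm_rpow _ _ _ hβ.ne']
  calc ENNReal.ofReal α * lorentzIntegral (β / α) β (distFn Ω U)
      ≤ ENNReal.ofReal α * (2 * (ENNReal.ofReal (c₁ ^ β) * (ENNReal.ofReal (lam₀ ^ β / β)
          * volume Ω ^ (β / α) + 2 ^ (β / α) * ENNReal.ofReal (c₂ ^ (-β))
            * lorentzIntegral (β / α) β (distFn Ω V)))) := by
        gcongr
        exact lorentzIntegral_le_of_goodLambda_of_small (distFn_antitone Ω U)
          (distFn_le_volume Ω U) (div_pos hβ hα).le hβ hlam₀ hc₁ hc₂ hδ hsmall hgood hIfin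
    _ = _ := by ring

lemma volume_ball_rpow {n : ℕ} [Nontrivial (EuclideanSpace ℝ (Fin n))]
    (x : EuclideanSpace ℝ (Fin n)) {ρ : ℝ} (hρ : 0 < ρ) (α β : ℝ) :
    volume (ball x ρ) ^ (β / α)
      = volume (ball (0 : EuclideanSpace ℝ (Fin n)) 1) ^ (β / α)
        * ENNReal.ofReal (ρ ^ ((n : ℝ) / α)) ^ β := by
  rw [Measure.addHaar_ball volume x hρ.le, finrank_euclideanSpace_fin,
    ENNReal.mul_rpow_of_ne_top ofReal_ne_top measure_ball_lt_top.ne, mul_comm,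
    ENNReal.ofReal_rpow_of_pos (by positivity), ENNReal.ofReal_rpow_of_pos (by positivity),
    ← Real.rpow_natCast, ← Real.rpow_mul hρ.le, ← Real.rpow_mul hρ.le, mul_div_assoc',
    div_mul_eq_mul_div]

lemma lorentzNorm_ball_inter_rpow_le_of_goodLambda {n : ℕ}
    [Nontrivial (EuclideanSpace ℝ (Fin n))] {Ω : Set (EuclideanSpace ℝ (Fin n))}
    {x : EuclideanSpace ℝ (Fin n)} {U V : EuclideanSpace ℝ (Fin n) → ℝ≥0∞}
    {ρ α β lam₀ c₁ c₂ δ : ℝ} (hρ : 0 < ρ) (hα : 0 < α) (hβ : 0 < β)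
    (hlam₀ : 0 ≤ lam₀) (hc₁ : 0 < c₁) (hc₂ : 0 < c₂) (hδ : 0 ≤ δ)
    (hsmall : c₁ ^ β * (2 * δ) ^ (β / α) ≤ 1 / 2)
    (hgood : ∀ t, lam₀ < t → distFn (ball x ρ ∩ Ω) U (c₁ * t)
      ≤ ENNReal.ofReal δ * distFn (ball x ρ ∩ Ω) U t + distFn (ball x ρ ∩ Ω) V (c₂ * t))
    (hfin : lorentzNorm (ball x ρ ∩ Ω) U α β ≠ ∞) :
    lorentzNorm (ball x ρ ∩ Ω) U α β ^ β ≤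
      2 * (ENNReal.ofReal α * ENNReal.ofReal (c₁ ^ β))
          * (ENNReal.ofReal (1 / β) * volume (ball (0 : EuclideanSpace ℝ (Fin n)) 1) ^ (β / α))
          * ENNReal.ofReal (lam₀ * ρ ^ ((n : ℝ) / α)) ^ β
        + 2 * ENNReal.ofReal (c₁ ^ β) * 2 ^ (β / α) * ENNReal.ofReal (c₂ ^ (-β))
          * lorentzNorm (ball x ρ ∩ Ω) V α β ^ β := by
  have hlow : ENNReal.ofReal (lam₀ ^ β / β) * volume (ball x ρ ∩ Ω) ^ (β / α)
      ≤ ENNReal.ofReal (1 / β) * volume (ball (0 : EuclideanSpace ℝ (Fin n)) 1) ^ (β / α)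
        * ENNReal.ofReal (lam₀ * ρ ^ ((n : ℝ) / α)) ^ β :=
    calc _ ≤ ENNReal.ofReal (lam₀ ^ β / β) * volume (ball x ρ) ^ (β / α) := by
          gcongr
          exact inter_subset_left
      _ = _ := by
          rw [volume_ball_rpow x hρ, div_eq_mul_one_div (lam₀ ^ β),
            ENNReal.ofReal_mul (by positivity), ← ENNReal.ofReal_rpow_of_nonneg hlam₀ hβ.le,
            ENNReal.ofReal_mul hlam₀, ENNReal.mul_rpow_of_nonneg _ _ hβ.le]
          ring
  calc _ ≤ _ := lorentzNorm_rpow_le_of_goodLambda hα hβ hlam₀ hc₁ hc₂ hδ hsmall hgood hfin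
    _ ≤ 2 * (ENNReal.ofReal α * ENNReal.ofReal (c₁ ^ β))
          * (ENNReal.ofReal (1 / β) * volume (ball (0 : EuclideanSpace ℝ (Fin n)) 1) ^ (β / α)
            * ENNReal.ofReal (lam₀ * ρ ^ ((n : ℝ) / α)) ^ β)
        + 2 * ENNReal.ofReal (c₁ ^ β) * 2 ^ (β / α) * ENNReal.ofReal (c₂ ^ (-β))
          * lorentzNorm (ball x ρ ∩ Ω) V α β ^ β := by gcongr
    _ = _ := by ring

theorem statement8_general (n : ℕ) (hn : 2 ≤ n) (a b C₁ ε₀ α β : ℝ) (ha : 0 < a)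
    (hC₁ : 0 < C₁) (hε₀0 : 0 < ε₀)
    (hα0 : 0 < α) (hαa : α < 1 / a) (hβ0 : 0 < β) :
    ∃ C > (0 : ℝ), ∀ (Ω : Set (EuclideanSpace ℝ (Fin n)))
      (x : EuclideanSpace ℝ (Fin n)) (ρ lam₀ : ℝ)
      (U V : EuclideanSpace ℝ (Fin n) → ℝ≥0∞),
      0 < ρ → 0 ≤ lam₀ →
      (∀ lam ε : ℝ, lam₀ < lam → 0 < ε → ε < ε₀ →
        distFn (ball x ρ ∩ Ω) U (ε ^ (-a) * lam) ≤
          ENNReal.ofReal (C₁ * ε) * distFn (ball x ρ ∩ Ω) U lam +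
            distFn (ball x ρ ∩ Ω) V (ε ^ b * lam)) →
      lorentzNorm (ball x ρ ∩ Ω) U α β ≠ ∞ →
      lorentzNorm (ball x ρ ∩ Ω) U α β ≤
        ENNReal.ofReal (C * lam₀ * ρ ^ ((n : ℝ) / α)) +
          ENNReal.ofReal C * lorentzNorm (ball x ρ ∩ Ω) V α β := by
  have hexp : a * β < β / α := by
    rw [lt_div_iff₀ hα0]
    nlinarith [(lt_div_iff₀ ha).mp hαa]
  obtain ⟨ε, ⟨hε0, hεε₀⟩, hsmall⟩ :=
    exists_rpow_neg_mul_rpow_le (mul_pos two_pos hC₁).le hexp hε₀0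
  have : Nontrivial (EuclideanSpace ℝ (Fin n)) :=
    Module.nontrivial_of_finrank_pos (R := ℝ) (by rw [finrank_euclideanSpace_fin]; omega)
  set A := 2 * (ENNReal.ofReal α * ENNReal.ofReal ((ε ^ (-a)) ^ β))
    * (ENNReal.ofReal (1 / β) * volume (ball (0 : EuclideanSpace ℝ (Fin n)) 1) ^ (β / α))
  set B := 2 * ENNReal.ofReal ((ε ^ (-a)) ^ β) * 2 ^ (β / α) * ENNReal.ofReal ((ε ^ b) ^ (-β))
  set K := (2 * max A B) ^ (1 / β)
  have hK : K ≠ ∞ := by finiteness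
  have hK0 : K ≠ 0 := by positivity
  refine ⟨K.toReal, toReal_pos hK0 hK, fun Ω x ρ lam₀ U V hρ hlam₀ hgood hfin => ?_⟩
  have hN := lorentzNorm_ball_inter_rpow_le_of_goodLambda hρ hα0 hβ0 hlam₀
    (Real.rpow_pos_of_pos hε0 _) (Real.rpow_pos_of_pos hε0 _) (by positivity : 0 ≤ C₁ * ε)
    (by rwa [← mul_assoc]) (fun t ht => hgood t ε ht hε0 hεε₀) hfin
  calc lorentzNorm (ball x ρ ∩ Ω) U α β
      ≤ K * (ENNReal.ofReal (lam₀ * ρ ^ ((n : ℝ) / α)) + lorentzNorm (ball x ρ ∩ Ω) V α β) :=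
        ENNReal.le_mul_add_of_rpow_le hβ0 hN
    _ = _ := by
        rw [mul_add, mul_assoc K.toReal, ENNReal.ofReal_mul toReal_nonneg, ENNReal.ofReal_toReal hK]

theorem statement8 (n : ℕ) (hn : 2 ≤ n) (a b C₁ ε₀ α β : ℝ) (ha : 0 < a)
    (hC₁ : 0 < C₁) (hε₀0 : 0 < ε₀) (hε₀1 : ε₀ < 1)
    (hα0 : 0 < α) (hαa : α < 1 / a) (hβ0 : 0 < β) :
    ∃ C > (0 : ℝ), ∀ (Ω : Set (EuclideanSpace ℝ (Fin n)))
      (x : EuclideanSpace ℝ (Fin n)) (ρ lam₀ : ℝ)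
      (U V : EuclideanSpace ℝ (Fin n) → ℝ≥0∞),
      0 < ρ → 0 ≤ lam₀ →
      (∀ lam ε : ℝ, lam₀ < lam → 0 < ε → ε < ε₀ →
        distFn (ball x ρ ∩ Ω) U (ε ^ (-a) * lam) ≤
          ENNReal.ofReal (C₁ * ε) * distFn (ball x ρ ∩ Ω) U lam +
            distFn (ball x ρ ∩ Ω) V (ε ^ b * lam)) →
      lorentzNorm (ball x ρ ∩ Ω) U α β ≠ ∞ →
      lorentzNorm (ball x ρ ∩ Ω) U α β ≤
        ENNReal.ofReal (C * lam₀ * ρ ^ ((n : ℝ) / α)) +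
          ENNReal.ofReal C * lorentzNorm (ball x ρ ∩ Ω) V α β :=
  statement8_general n hn a b C₁ ε₀ α β ha hC₁ hε₀0 hα0 hαa hβ0
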